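/- Downward closure of step-indexed semantic typing: (1) e ∈_k σ⁻ implies e ∈_i σ⁻ for all i ≤ k; (2) e ∈⊛_{k+1} σ⁻ implies e ∈⊛_{i+1} σ⁻ for all i ≤ k; (3) v ∈_k τ⁺ implies v ∈_i τ⁺ for all i ≤ k. -/

import Mathlib

namespace CBPV

abbrev Label := String
abbrev Var := String

-- Positive types (values); `name` refers to an equirecursively defined type name.
mutual
inductive PosTp : Type where
  | name : String → PosTp
  | str  : PosStr → PosTp

/-- Structural positive types. -/
inductive PosStr : Type where
  | tensor : PosTp → PosTp → PosStr
  | one    : PosStr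
  | plus   : List (Label × PosTp) → PosStr
  | down   : NegTp → PosStr

/-- Negative types (computations). -/
inductive NegTp : Type where
  | name : String → NegTp
  | str  : NegStr → NegTp

/-- Structural negative types. -/
inductive NegStr : Type where
  | arrow   : PosTp → NegTp → NegStr
  | withRec : List (Label × NegTp) → NegStr
  | up      : PosTp → NegStr
end

mutual
/-- Values. -/
inductive Val : Type where
  | var   : Var → Val
  | pair  : Val → Val → Val
  | unit  : Val
  | inj   : Label → Val → Val
  | thunk : Comp → Val

/-- Computations. -/
inductive Comp : Type where
  | lam       : Var → Comp → Comp
  | app       : Comp → Val → Comp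
  | record    : List (Label × Comp) → Comp
  | proj      : Comp → Label → Comp
  | ret       : Val → Comp
  | letret    : Var → Comp → Comp → Comp
  | name      : String → Comp
  | matchPair : Val → Var → Var → Comp → Comp
  | matchUnit : Val → Comp → Comp
  | matchSum  : Val → List (Label × Var × Comp) → Comp
  | force     : Val → Comp
end

/-- A global signature: equirecursive (contractive) type definitions `t = τ⁺`,
`s = σ⁻`, and recursive expression definitions `f : σ⁻ = e`. -/
structure Signature : Type where
  pos  : String → PosStr
  neg  : String → NegStr
  defs : String → NegTp × Comp

mutual
/-- Substitution of value `w` for variable `x` in a value. -/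
def substV (w : Val) (x : Var) : Val → Val
  | .var y => if y = x then w else .var y
  | .pair v₁ v₂ => .pair (substV w x v₁) (substV w x v₂)
  | .unit => .unit
  | .inj j v => .inj j (substV w x v)
  | .thunk e => .thunk (substC w x e)

/-- Substitution of value `w` for variable `x` in a computation. -/
def substC (w : Val) (x : Var) : Comp → Comp
  | .lam y e => .lam y (if y = x then e else substC w x e)
  | .app e v => .app (substC w x e) (substV w x v)
  | .record L => .record (substRec w x L)
  | .proj e j => .proj (substC w x e) j
  | .ret v => .ret (substV w x v)
  | .letret y e₁ e₂ => .letret y (substC w x e₁) (if y = x then e₂ else substC w x e₂)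
  | .name f => .name f
  | .matchPair v y z e =>
      .matchPair (substV w x v) y z (if y = x ∨ z = x then e else substC w x e)
  | .matchUnit v e => .matchUnit (substV w x v) (substC w x e)
  | .matchSum v B => .matchSum (substV w x v) (substBr w x B)
  | .force v => .force (substV w x v)

def substRec (w : Val) (x : Var) : List (Label × Comp) → List (Label × Comp)
  | [] => []
  | (l, e) :: rest => (l, substC w x e) :: substRec w x rest

def substBr (w : Val) (x : Var) : List (Label × Var × Comp) → List (Label × Var × Comp)
  | [] => []
  | (l, y, e) :: rest =>
      (l, y, if y = x then e else substC w x e) :: substBr w x rest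
end

/-- Terminal computations. -/
inductive Terminal : Comp → Prop where
  | lam    : Terminal (.lam x e)
  | record : Terminal (.record L)
  | ret    : Terminal (.ret v)

/-- Small-step dynamics of call-by-push-value, relative to a signature. -/
inductive Step (Sg : Signature) : Comp → Comp → Prop where
  | beta       : Step Sg (.app (.lam x e) v) (substC v x e)
  | app        : Step Sg e e' → Step Sg (.app e v) (.app e' v)
  | letretBeta : Step Sg (.letret x (.ret v) e₂) (substC v x e₂)
  | letretStep : Step Sg e₁ e₁' → Step Sg (.letret x e₁ e₂) (.letret x e₁' e₂)
  | projBeta   : L.lookup j = some e → Step Sg (.proj (.record L) j) e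
  | projStep   : Step Sg e e' → Step Sg (.proj e j) (.proj e' j)
  | matchPair  : Step Sg (.matchPair (.pair v₁ v₂) x y e) (substC v₁ x (substC v₂ y e))
  | matchUnit  : Step Sg (.matchUnit .unit e) e
  | matchSum   : B.lookup j = some (x, ej) → Step Sg (.matchSum (.inj j v) B) (substC v x ej)
  | force      : Step Sg (.force (.thunk e)) e
  | name       : Sg.defs f = (σ, e) → Step Sg (.name f) e

end CBPV

namespace CBPV

/-- Unfold a positive type to a structural type using the signature
(equirecursive type definitions). -/
def unfP (Sg : Signature) : PosTp → PosStr
  | .name t => Sg.pos t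
  | .str τ => τ

/-- Unfold a negative type to a structural type using the signature. -/
def unfN (Sg : Signature) : NegTp → NegStr
  | .name s => Sg.neg s
  | .str σ => σ

/-- Step-indexed semantic typing of values against structural positive types,
parametrized by the semantic typing `SC` of computations (at the same index). -/
def SemValS (Sg : Signature) (SC : Comp → NegTp → Prop) : Val → PosStr → Prop
  | .pair v₁ v₂, .tensor τ₁ τ₂ =>
      SemValS Sg SC v₁ (unfP Sg τ₁) ∧ SemValS Sg SC v₂ (unfP Sg τ₂)
  | .unit, .one => True
  | .inj j v, .plus L => ∃ τ, L.lookup j = some τ ∧ SemValS Sg SC v (unfP Sg τ)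
  | .thunk e, .down σ => SC e σ
  | _, _ => False

mutual
/-- `SemComp Sg k e σ` is the step-indexed semantic typing `e ∈_k σ⁻`:
`e ∈_0 σ⁻` always, and `e ∈_{k+1} σ⁻` iff either `e ↦ e'` with `e' ∈_k σ⁻`,
or `e` is terminal and `e ∈⊛_{k+1} σ⁻`. -/
def SemComp (Sg : Signature) : ℕ → Comp → NegTp → Prop
  | 0, _, _ => True
  | k+1, e, σ =>
      (∃ e', Step Sg e e' ∧ SemComp Sg k e' σ) ∨
      (Terminal e ∧ SemTerm Sg (k+1) e σ)
termination_by k e σ => (k, 1)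

/-- `SemTerm Sg (k+1) e σ` is the semantic typing `e ∈⊛_{k+1} σ⁻` of terminal
computations.  Since applications `e v` and projections `e.j` are never
terminal, the requirements `e v ∈_{k+1} σ` and `e.j ∈_{k+1} σ_j` are stated in
their (equivalent) unfolded form: the application/projection takes a step to a
computation in the type at index `k`. -/
def SemTerm (Sg : Signature) : ℕ → Comp → NegTp → Prop
  | 0, _, _ => True
  | k+1, e, σ =>
      match unfN Sg σ with
      | .arrow τ σ₂ =>
          ∀ i, i ≤ k → ∀ v, SemValS Sg (SemComp Sg i) v (unfP Sg τ) →
            ∃ e'', Step Sg (.app e v) e'' ∧ SemComp Sg k e'' σ₂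
      | .withRec K =>
          ∀ j σj, K.lookup j = some σj →
            ∃ e'', Step Sg (.proj e j) e'' ∧ SemComp Sg k e'' σj
      | .up τ => ∃ v, e = .ret v ∧ SemValS Sg (SemComp Sg k) v (unfP Sg τ)
termination_by k e σ => (k, 0)
end

/-- `v ∈_k τ⁺`: step-indexed semantic typing of values. -/
def SemVal (Sg : Signature) (k : ℕ) (v : Val) (τ : PosTp) : Prop :=
  SemValS Sg (SemComp Sg k) v (unfP Sg τ)

/-- `v ∈ τ⁺`: semantic typing of values (at every step index). -/
def SemValAll (Sg : Signature) (v : Val) (τ : PosTp) : Prop :=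
  ∀ k, SemVal Sg k v τ

/-- `e ∈ σ⁻`: semantic typing of computations (at every step index). -/
def SemCompAll (Sg : Signature) (e : Comp) (σ : NegTp) : Prop :=
  ∀ k, SemComp Sg k e σ

end CBPV

namespace CBPV

/-! The two judgements on computations lose one index at a time, by a joint induction on the
index: a step `e ↦ e'` asks for `e'` one index lower, the terminal clauses at index `k+1` refer
to lower indices only through `∈_k` (directly or inside returned values), and the arrow clause's
range `i ≤ k` only shrinks. Values follow since `SemValS` is monotone in its judgement on thunks. -/

section

variable (Sg : Signature)

theorem semValS_mono {SC SC' : Comp → NegTp → Prop}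
    (h : ∀ e σ, SC e σ → SC' e σ) :
    ∀ (v : Val) (τ : PosStr), SemValS Sg SC v τ → SemValS Sg SC' v τ
  | .pair v₁ v₂, .tensor _ _, ⟨h₁, h₂⟩ =>
      ⟨semValS_mono h v₁ _ h₁, semValS_mono h v₂ _ h₂⟩
  | .unit, .one, _ => trivial
  | .inj _ v, .plus _, ⟨τ, hl, hv⟩ => ⟨τ, hl, semValS_mono h v _ hv⟩
  | .thunk e, .down σ, he => h e σ he

theorem semTerm_of_semTerm_succ {k : ℕ}
    (hC : ∀ e σ, SemComp Sg (k+1) e σ → SemComp Sg k e σ) (e : Comp) (σ : NegTp) :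
    SemTerm Sg (k+2) e σ → SemTerm Sg (k+1) e σ := by
  rw [SemTerm, SemTerm]
  rcases unfN Sg σ with ⟨τ, σ₂⟩ | K | τ
  · intro h i hi v hv
    obtain ⟨e', hstep, he'⟩ := h i (hi.trans k.le_succ) v hv
    exact ⟨e', hstep, hC e' σ₂ he'⟩
  · intro h j σj hj
    obtain ⟨e', hstep, he'⟩ := h j σj hj
    exact ⟨e', hstep, hC e' σj he'⟩
  · rintro ⟨v, rfl, hv⟩
    exact ⟨v, rfl, semValS_mono Sg hC v _ hv⟩

theorem semComp_of_semComp_succ (k : ℕ) (e : Comp) (σ : NegTp) :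
    SemComp Sg (k+1) e σ → SemComp Sg k e σ := by
  induction k generalizing e σ with
  | zero => intro; rw [SemComp]; trivial
  | succ k ih =>
    rw [SemComp, SemComp]
    rintro (⟨e', hstep, he'⟩ | ⟨hterm, he⟩)
    · exact Or.inl ⟨e', hstep, ih e' σ he'⟩
    · exact Or.inr ⟨hterm, semTerm_of_semTerm_succ Sg ih e σ he⟩

theorem semComp_antitone (e : Comp) (σ : NegTp) : Antitone (SemComp Sg · e σ) :=
  antitone_nat_of_succ_le fun k => semComp_of_semComp_succ Sg k e σ

theorem semTerm_antitone (e : Comp) (σ : NegTp) : Antitone fun k => SemTerm Sg (k + 1) e σ :=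
  antitone_nat_of_succ_le fun k =>
    semTerm_of_semTerm_succ Sg (semComp_of_semComp_succ Sg k) e σ

theorem semVal_antitone (v : Val) (τ : PosTp) : Antitone (SemVal Sg · v τ) :=
  fun _ _ hik => semValS_mono Sg (fun e σ => semComp_antitone Sg e σ hik) v _

end

/-- Downward closure of step-indexed semantic typing:
(1) `e ∈_k σ⁻` implies `e ∈_i σ⁻` for all `i ≤ k`;
(2) `e ∈⊛_{k+1} σ⁻` implies `e ∈⊛_{i+1} σ⁻` for all `i ≤ k`;
(3) `v ∈_k τ⁺` implies `v ∈_i τ⁺` for all `i ≤ k`. -/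
theorem downward_closure (Sg : Signature) :
    (∀ k (e : Comp) (σ : NegTp), SemComp Sg k e σ → ∀ i ≤ k, SemComp Sg i e σ) ∧
    (∀ k (e : Comp) (σ : NegTp), SemTerm Sg (k+1) e σ → ∀ i ≤ k, SemTerm Sg (i+1) e σ) ∧
    (∀ k (v : Val) (τ : PosTp), SemVal Sg k v τ → ∀ i ≤ k, SemVal Sg i v τ) :=
  ⟨fun _ e σ h _ hi => semComp_antitone Sg e σ hi h,
    fun _ e σ h _ hi => semTerm_antitone Sg e σ hi h,
    fun _ v τ h _ hi => semVal_antitone Sg v τ hi h⟩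

end CBPV
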